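/- For every integer j ≥ 4 and every x ∈ ℝ, the derivatives of the generalized Airy function of order 4 satisfy the recursion φ^(j)(x) = (j−3)·φ^(j−4)(x) + x·φ^(j−3)(x), where φ^(k) denotes the k-th derivative of φ. -/

import Mathlib

open MeasureTheory Real Filter

noncomputable def φ (x : ℝ) : ℂ :=
  (1 / (2 * Real.pi)) * ∫ l : ℝ, Complex.exp (Complex.I * l * x - l ^ 4 / 4)

namespace Airy4Aux

open Complex FourierTransform Set

/-- The weight function. -/
noncomputable def g (l : ℝ) : ℂ := Complex.exp (((-(l ^ 4) / 4 : ℝ) : ℂ))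

lemma g_eq (l : ℝ) : g l = Complex.exp (-(l : ℂ) ^ 4 / 4) := by
  rw [g]; push_cast; ring_nf

lemma g_cont : Continuous g := by
  unfold g; fun_prop

lemma norm_g (l : ℝ) : ‖g l‖ = Real.exp (-(l ^ 4) / 4) := by
  rw [g, Complex.norm_exp, Complex.ofReal_re]

/-- Integrability of `|x|^n * exp (-x^4/4)` on the real line. -/
lemma integrable_weight (n : ℕ) :
    Integrable (fun x : ℝ => |x| ^ n * Real.exp (-(x ^ 4) / 4)) := by
  have h0 : IntegrableOn (fun x : ℝ => |x| ^ n * Real.exp (-(x ^ 4) / 4)) (Ioi 0) := by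
    have := integrableOn_rpow_mul_exp_neg_mul_rpow (p := 4) (s := n) (b := 1/4)
      (lt_of_lt_of_le neg_one_lt_zero (Nat.cast_nonneg n)) (by norm_num) (by norm_num)
    refine this.congr_fun (fun x hx => ?_) measurableSet_Ioi
    have hx' : (0:ℝ) < x := hx
    have h4 : x ^ (4:ℝ) = x ^ (4:ℕ) := by
      rw [← Real.rpow_natCast x 4]; norm_num
    rw [abs_of_pos hx']; beta_reduce; rw [Real.rpow_natCast, h4]
    ring_nf
  have h1 : IntegrableOn (fun x : ℝ => |x| ^ n * Real.exp (-(x ^ 4) / 4)) (Iio 0) := by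
    have := (MeasurePreserving.integrableOn_comp_preimage
      (Measure.measurePreserving_neg (volume : Measure ℝ))
      (Homeomorph.neg ℝ).measurableEmbedding).2 h0
    have hs : (Neg.neg : ℝ → ℝ) ⁻¹' (Ioi 0) = Iio 0 := by ext x; simp
    rw [hs] at this
    refine this.congr_fun (fun x _ => ?_) measurableSet_Iio
    have h4 : ∀ y : ℝ, (-y) ^ 4 = y ^ 4 := fun y => by ring
    simp only [Function.comp_apply, abs_neg, h4]
  have h2 : IntegrableOn (fun x : ℝ => |x| ^ n * Real.exp (-(x ^ 4) / 4)) (Iic 0) := by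
    rw [← Iio_union_right]
    exact h1.union ((integrableOn_singleton_iff (by simp)).2 (Or.inr (by simp)))
  have := h2.union h0
  rwa [Iic_union_Ioi, integrableOn_univ] at this

lemma integrable_aux {E : Type*} [NormedAddCommGroup E] {f : ℝ → E}
    (hc : Continuous f) (n : ℕ) (C : ℝ)
    (hb : ∀ l : ℝ, ‖f l‖ ≤ C * (|l| ^ n * Real.exp (-(l ^ 4) / 4))) :
    Integrable f := by
  refine ((integrable_weight n).const_mul C).mono' hc.aestronglyMeasurable ?_
  filter_upwards with l using hb l

lemma integrable_pow_smul_g (n : ℕ) :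
    Integrable (fun l : ℝ => l ^ n • g l) := by
  refine integrable_aux ((continuous_pow n).smul g_cont) n 1 (fun l => ?_)
  rw [norm_smul, norm_g, Real.norm_eq_abs, _root_.abs_pow, one_mul]

lemma integrable_norm_pow_g (n : ℕ) :
    Integrable (fun l : ℝ => ‖l‖ ^ n * ‖g l‖) := by
  refine integrable_aux (((continuous_pow n).comp continuous_norm).mul g_cont.norm)
    n 1 (fun l => ?_)
  simp only [Real.norm_eq_abs, norm_g, _root_.abs_mul, _root_.abs_pow, _root_.abs_abs,
    Real.abs_exp, one_mul]
  exact le_refl (|l| ^ n * rexp (-l ^ 4 / 4))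

noncomputable def F : ℝ → ℂ := 𝓕 g

lemma hF_smooth : ContDiff ℝ ((⊤ : ℕ∞) : WithTop ℕ∞) F :=
  Real.contDiff_fourier (N := ⊤) (fun n _ => integrable_norm_pow_g n)

/-- The scaling constant. -/
noncomputable def r : ℝ := -(2 * π)⁻¹

noncomputable def c : ℂ := 1 / (2 * (π : ℝ))

lemma phi_eq (x : ℝ) : φ x = c * F (r * x) := by
  rw [φ, F, Real.fourier_real_eq_integral_exp_smul, c]
  congr 1
  refine integral_congr_ae (Filter.Eventually.of_forall fun v => ?_)
  show Complex.exp (Complex.I * ↑v * ↑x - ↑v ^ 4 / 4)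
      = Complex.exp (↑(-2 * π * v * (r * x)) * Complex.I) • g v
  rw [smul_eq_mul, g, ← Complex.exp_add]
  congr 1
  have hπ : (π : ℝ) ≠ 0 := Real.pi_ne_zero
  have h : -2 * π * v * (r * x) = v * x := by
    rw [r]; field_simp
  rw [h]
  push_cast
  ring

noncomputable def g1 (l : ℝ) : ℂ := (-2 * ↑π * Complex.I * ↑l) • g l
noncomputable def g2 (l : ℝ) : ℂ := (-2 * ↑π * Complex.I * ↑l) • g1 l
noncomputable def g3 (l : ℝ) : ℂ := (-2 * ↑π * Complex.I * ↑l) • g2 l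

lemma norm_coef (l : ℝ) : ‖(-2 * (π:ℂ) * Complex.I * (l:ℂ) : ℂ)‖ = 2 * π * |l| := by
  simp only [norm_mul, norm_neg, Complex.norm_I, Complex.norm_real, Complex.norm_ofNat, Real.norm_eq_abs]
  rw [_root_.abs_of_nonneg Real.pi_pos.le]
  norm_num

lemma coef_cont : Continuous (fun l : ℝ => (-2 * (π:ℂ) * Complex.I * (l:ℂ) : ℂ)) := by
  fun_prop
lemma g1_cont : Continuous g1 := coef_cont.smul g_cont
lemma g2_cont : Continuous g2 := coef_cont.smul g1_cont
lemma g3_cont : Continuous g3 := coef_cont.smul g2_cont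

lemma norm_g1 (l : ℝ) : ‖g1 l‖ = 2 * π * |l| * ‖g l‖ := by
  rw [g1, norm_smul, norm_coef]
lemma norm_g2 (l : ℝ) : ‖g2 l‖ = (2 * π * |l|) ^ 2 * ‖g l‖ := by
  rw [g2, norm_smul, norm_coef, norm_g1]; ring
lemma norm_g3 (l : ℝ) : ‖g3 l‖ = (2 * π * |l|) ^ 3 * ‖g l‖ := by
  rw [g3, norm_smul, norm_coef, norm_g2]; ring

lemma I_g : Integrable g := by simpa using integrable_pow_smul_g 0
lemma I_sg : Integrable (fun l : ℝ => l • g l) := by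
  simpa using integrable_pow_smul_g 1

lemma I_g1 : Integrable g1 := by
  refine integrable_aux g1_cont 1 (2 * π) (fun l => ?_)
  rw [norm_g1, norm_g, pow_one]; ring_nf; exact le_refl _
lemma I_sg1 : Integrable (fun l : ℝ => l • g1 l) := by
  refine integrable_aux (continuous_id.smul g1_cont) 2 (2 * π) (fun l => ?_)
  rw [norm_smul, norm_g1, norm_g, Real.norm_eq_abs]
  have : |l| * (2 * π * |l| * Real.exp (-(l ^ 4) / 4))
      = 2 * π * (|l| ^ 2 * Real.exp (-(l ^ 4) / 4)) := by ring
  rw [this]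
lemma I_g2 : Integrable g2 := by
  refine integrable_aux g2_cont 2 ((2 * π) ^ 2) (fun l => ?_)
  rw [norm_g2, norm_g]
  have : (2 * π * |l|) ^ 2 * Real.exp (-(l ^ 4) / 4)
      = (2 * π) ^ 2 * (|l| ^ 2 * Real.exp (-(l ^ 4) / 4)) := by ring
  rw [this]
lemma I_sg2 : Integrable (fun l : ℝ => l • g2 l) := by
  refine integrable_aux (continuous_id.smul g2_cont) 3 ((2 * π) ^ 2) (fun l => ?_)
  rw [norm_smul, norm_g2, norm_g, Real.norm_eq_abs]
  have : |l| * ((2 * π * |l|) ^ 2 * Real.exp (-(l ^ 4) / 4))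
      = (2 * π) ^ 2 * (|l| ^ 3 * Real.exp (-(l ^ 4) / 4)) := by ring
  rw [this]

lemma hasDerivAt_F (w : ℝ) : HasDerivAt F (𝓕 g1 w) w :=
  Real.hasDerivAt_fourier I_g I_sg w
lemma hasDerivAt_F1 (w : ℝ) :
    HasDerivAt (𝓕 g1) (𝓕 g2 w) w :=
  Real.hasDerivAt_fourier I_g1 I_sg1 w
lemma hasDerivAt_F2 (w : ℝ) :
    HasDerivAt (𝓕 g2) (𝓕 g3 w) w :=
  Real.hasDerivAt_fourier I_g2 I_sg2 w

lemma hasDerivAt_g (l : ℝ) : HasDerivAt g (-(l:ℂ) ^ 3 * g l) l := by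
  have hp : HasDerivAt (fun z : ℂ => -z ^ 4 / 4) (-(l:ℂ) ^ 3) (l:ℂ) := by
    have := ((hasDerivAt_pow 4 ((l:ℂ))).neg.div_const 4)
    refine this.congr_deriv ?_
    norm_num
    ring
  have h1 : HasDerivAt (fun z : ℂ => Complex.exp (-z ^ 4 / 4))
      (Complex.exp (-(l:ℂ) ^ 4 / 4) * (-(l:ℂ) ^ 3)) (l:ℂ) := hp.cexp
  have h2 := h1.comp_ofReal
  have hfun : (fun y : ℝ => Complex.exp (-(y:ℂ) ^ 4 / 4)) = g := by
    funext y; rw [g_eq]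
  rw [hfun] at h2
  convert h2 using 1
  rw [← g_eq]
  ring

lemma deriv_g : deriv g = fun l : ℝ => -(l:ℂ) ^ 3 * g l :=
  funext fun l => (hasDerivAt_g l).deriv

lemma I_dg : Integrable (deriv g) := by
  rw [deriv_g]
  refine integrable_aux ((by fun_prop : Continuous fun l : ℝ => -(l:ℂ) ^ 3).mul g_cont)
    3 1 (fun l => ?_)
  rw [norm_mul, norm_g, one_mul, norm_neg, norm_pow, Complex.norm_real, Real.norm_eq_abs]

lemma fourier_deriv_g :
    𝓕 (deriv g)
      = fun w : ℝ => (2 * ↑π * Complex.I * ↑w) • 𝓕 g w :=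
  Real.fourier_deriv I_g (fun l => (hasDerivAt_g l).differentiableAt) I_dg

lemma fourier_const_mul (a : ℂ) (h : ℝ → ℂ) (w : ℝ) :
    𝓕 (fun l => a * h l) w = a * 𝓕 h w := by
  rw [Real.fourier_real_eq, Real.fourier_real_eq, ← integral_const_mul]
  refine integral_congr_ae (Filter.Eventually.of_forall fun v => ?_)
  simp only [Circle.smul_def, smul_eq_mul]
  ring

lemma g3_eq : (fun l : ℝ => g3 l) = fun l : ℝ => (2 * (π:ℂ) * Complex.I) ^ 3 * deriv g l := by
  funext l
  simp only [g3, g2, g1, smul_eq_mul, deriv_g]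
  ring

lemma fourier_g3 (w : ℝ) :
    𝓕 g3 w
      = (2 * (π:ℂ) * Complex.I) ^ 3 * ((2 * ↑π * Complex.I * ↑w) * F w) := by
  have : 𝓕 g3 w
      = 𝓕 ((fun l : ℝ => (2 * (π:ℂ) * Complex.I) ^ 3 * deriv g l) : ℝ → ℂ) w := by
    rw [← g3_eq]
  rw [this, fourier_const_mul, fourier_deriv_g]
  simp only [smul_eq_mul]
  rfl

lemma chain {G G' : ℝ → ℂ} (hG : ∀ w, HasDerivAt G (G' w) w) (a : ℂ) (x : ℝ) :
    HasDerivAt (fun x : ℝ => a * G (r * x)) ((a * (r:ℝ)) * G' (r * x)) x := by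
  have hb : HasDerivAt (fun x : ℝ => r * x) r x := by
    simpa using (hasDerivAt_id x).const_mul r
  have h1 : HasDerivAt (fun x : ℝ => G (r * x)) (r • G' (r * x)) x :=
    HasDerivAt.scomp x (hG (r * x)) hb
  have h2 := h1.const_mul a
  refine h2.congr_deriv ?_
  rw [Complex.real_smul]
  ring

noncomputable def D1 : ℝ → ℂ := fun x => (c * (r:ℝ)) * 𝓕 g1 (r * x)
noncomputable def D2 : ℝ → ℂ := fun x => (c * (r:ℝ) * (r:ℝ)) * 𝓕 g2 (r * x)
noncomputable def D3 : ℝ → ℂ :=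
  fun x => (c * (r:ℝ) * (r:ℝ) * (r:ℝ)) * 𝓕 g3 (r * x)

lemma phi_fun_eq : φ = fun x : ℝ => c * F (r * x) := funext phi_eq

lemma deriv_phi : deriv φ = D1 := by
  funext x
  have := chain hasDerivAt_F c x
  rw [← phi_fun_eq] at this
  exact this.deriv

lemma deriv_D1 : deriv D1 = D2 := by
  funext x
  have := chain hasDerivAt_F1 (c * (r:ℝ)) x
  exact this.deriv

lemma deriv_D2 : deriv D2 = D3 := by
  funext x
  have := chain hasDerivAt_F2 (c * (r:ℝ) * (r:ℝ)) x
  exact this.deriv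

lemma iteratedDeriv_three : iteratedDeriv 3 φ = D3 := by
  rw [show (3:ℕ) = 2 + 1 from rfl, iteratedDeriv_succ', deriv_phi,
    show (2:ℕ) = 1 + 1 from rfl, iteratedDeriv_succ', deriv_D1,
    show (1:ℕ) = 0 + 1 from rfl, iteratedDeriv_succ', deriv_D2, iteratedDeriv_zero]

lemma key3 (x : ℝ) : iteratedDeriv 3 φ x = (x : ℂ) * φ x := by
  rw [iteratedDeriv_three, D3, fourier_g3, phi_eq, c, r]
  have hπ : (π : ℂ) ≠ 0 := by
    exact_mod_cast Real.pi_ne_zero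
  have hI : (Complex.I) ^ 4 = 1 := Complex.I_pow_four
  push_cast
  field_simp
  ring_nf
  rw [hI]
  field_simp

lemma phi_smooth : ContDiff ℝ ((⊤ : ℕ∞) : WithTop ℕ∞) φ := by
  rw [phi_fun_eq]
  exact contDiff_const.mul (hF_smooth.comp ((contDiff_const (c := r)).mul contDiff_id))

lemma hasDerivAt_iter (n : ℕ) (x : ℝ) :
    HasDerivAt (iteratedDeriv n φ) (iteratedDeriv (n + 1) φ x) x := by
  have h1 : DifferentiableAt ℝ (iteratedDeriv n φ) x := by
    exact ((phi_smooth.differentiable_iteratedDeriv n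
      (by exact_mod_cast lt_of_lt_of_le (by simp : (n : ℕ∞) < ⊤) le_rfl)).differentiableAt)
  have := h1.hasDerivAt
  rwa [← iteratedDeriv_succ] at this

lemma hasDerivAt_ofReal (x : ℝ) : HasDerivAt (fun y : ℝ => (y : ℂ)) 1 x := by
  exact Complex.ofRealCLM.hasDerivAt (x := x)

lemma leibniz (k : ℕ) (x : ℝ) :
    iteratedDeriv (k + 1) (fun y : ℝ => (y : ℂ) * φ y) x
      = ((k : ℂ) + 1) * iteratedDeriv k φ x + (x : ℂ) * iteratedDeriv (k + 1) φ x := by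
  induction k generalizing x with
  | zero =>
    have h : HasDerivAt (fun y : ℝ => (y : ℂ) * φ y)
        ((1 : ℂ) * φ x + (x : ℂ) * iteratedDeriv 1 φ x) x := by
      have := (hasDerivAt_ofReal x).mul (hasDerivAt_iter 0 x)
      simp only [iteratedDeriv_zero] at this ⊢
      exact this
    rw [iteratedDeriv_one, h.deriv, iteratedDeriv_zero]
    push_cast; ring
  | succ k ih =>
    have hfun : iteratedDeriv (k + 1) (fun y : ℝ => (y : ℂ) * φ y)
        = fun x : ℝ => ((k : ℂ) + 1) * iteratedDeriv k φ x
            + (x : ℂ) * iteratedDeriv (k + 1) φ x := funext fun y => ih y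
    rw [iteratedDeriv_succ, hfun]
    have h : HasDerivAt (fun x : ℝ => ((k : ℂ) + 1) * iteratedDeriv k φ x
        + (x : ℂ) * iteratedDeriv (k + 1) φ x)
        (((k : ℂ) + 1) * iteratedDeriv (k + 1) φ x
          + ((1 : ℂ) * iteratedDeriv (k + 1) φ x
            + (x : ℂ) * iteratedDeriv (k + 2) φ x)) x := by
      exact ((hasDerivAt_iter k x).const_mul ((k : ℂ) + 1)).add
        ((hasDerivAt_ofReal x).mul (hasDerivAt_iter (k + 1) x))
    rw [h.deriv]
    push_cast; ring

lemma iter_add (m n : ℕ) (f : ℝ → ℂ) :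
    iteratedDeriv (m + n) f = iteratedDeriv m (iteratedDeriv n f) := by
  induction m with
  | zero => simp
  | succ m ih =>
    rw [show m + 1 + n = (m + n) + 1 from by omega, iteratedDeriv_succ, ih,
      ← iteratedDeriv_succ]

end Airy4Aux


/-- Recursion for the higher derivatives of the generalized Airy
function of order 4: `φ⁽ʲ⁾ = (j−3)·φ⁽ʲ⁻⁴⁾ + x·φ⁽ʲ⁻³⁾` for `j ≥ 4`. -/
theorem airy4_derivative_recursion :
    ∀ j : ℕ, 4 ≤ j → ∀ x : ℝ,
      iteratedDeriv j φ x
        = ((j : ℂ) - 3) * iteratedDeriv (j - 4) φ x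
          + (x : ℂ) * iteratedDeriv (j - 3) φ x := by
  intro j hj x
  obtain ⟨k, rfl⟩ : ∃ k, j = k + 4 := ⟨j - 4, by omega⟩
  rw [show k + 4 - 4 = k from by omega, show k + 4 - 3 = k + 1 from by omega,
    show k + 4 = (k + 1) + 3 from by omega, Airy4Aux.iter_add,
    show iteratedDeriv 3 φ = fun y : ℝ => (y : ℂ) * φ y from funext Airy4Aux.key3,
    Airy4Aux.leibniz k x]
  push_cast; ring
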